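/- Let α be a unital partial action of a finite abelian group G on a commutative ring S such that S is a partial α-Galois extension of R := S^α, regard S as an R-algebra via the inclusion R ⊆ S, and define φ : S ⊗_R S → Ŝ by φ(x ⊗ y) := (x·α_g(y·1_{g⁻¹}))_{g∈G}, where Ŝ := {a : G → S : a_g = a_g·1_g for all g ∈ G}. Then φ is an isomorphism of R-algebras, φ((S·1_h) ⊗ (S·1_{l⁻¹})) = Ŝ·1̂_{(h,l)} for all h, l ∈ G, and φ(α_h(x·1_{h⁻¹}) ⊗ α_{l⁻¹}(y·1_l)) = γ_{(h,l)}(φ(x·1_{h⁻¹} ⊗ y·1_l)) for all x, y ∈ S and h, l ∈ G; that is, φ is a partial (G×G)-isomorphism between the tensor-product partial action on S ⊗_R S and the partial action γ on Ŝ. (Proposition 6.1(ii).) -/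

import Mathlib

/-!
The Galois coordinates `xᵢ, yᵢ` give an explicit inverse of `φ` on `Ŝ`, namely
`ψ(a) = ∑_g ∑_i xᵢ ⊗ α_{g⁻¹}(yᵢ a_g 1_g)`. Then `φ ψ = id` because
`∑_i xᵢ α_g(yᵢ c 1_{g⁻¹}) = δ_{g,1} c`, and `ψ φ = id` because the partial trace
`s ↦ ∑_g α_g(s 1_{g⁻¹})` is `α`-invariant, hence lands in `R` and passes through the tensor sign.
The `R`-span of `(S 1_h) ⊗ (S 1_{l⁻¹})` is the corner cut out by the idempotent `1_h ⊗ 1_{l⁻¹}`,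
which `φ` sends to `1̂_{(h,l)}`; the intertwining identity follows from
`α_g(α_k(x 1_{k⁻¹}) 1_{g⁻¹}) = α_{gk}(x 1_{(gk)⁻¹}) 1_g`.
-/

open TensorProduct

structure IsUnitalPartialAction {G S : Type*} [Group G] [CommRing S]
    (E : G → S) (α : G → S → S) : Prop where
  E_one : E 1 = 1
  E_idem : ∀ g, IsIdempotentElem (E g)
  apply_add : ∀ g x y, x * E g⁻¹ = x → y * E g⁻¹ = y → α g (x + y) = α g x + α g y
  apply_mul : ∀ g x y, x * E g⁻¹ = x → y * E g⁻¹ = y → α g (x * y) = α g x * α g y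
  one_apply : ∀ x, α 1 x = x
  apply_E_mul_E : ∀ g k, α g (E g⁻¹ * E k) = E g * E (g * k)
  apply_apply : ∀ g k x, α g (α k (x * E k⁻¹) * E g⁻¹) = α (g * k) (x * E (g * k)⁻¹) * E g

namespace IsUnitalPartialAction

variable {G S : Type*} [Group G] [CommRing S] {E : G → S} {α : G → S → S}

theorem mul_E_mul_E (hα : IsUnitalPartialAction E α) (x : S) (g : G) :
    x * E g * E g = x * E g := by
  rw [mul_assoc, (hα.E_idem g).eq]

theorem apply_zero (hα : IsUnitalPartialAction E α) (g : G) : α g 0 = 0 := by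
  simpa using hα.apply_add g 0 0 (zero_mul _) (zero_mul _)

def hom (hα : IsUnitalPartialAction E α) (g : G) : S →ₙ+* S where
  toFun x := α g (x * E g⁻¹)
  map_mul' x y := by
    rw [show x * y * E g⁻¹ = x * E g⁻¹ * (y * E g⁻¹) by
      linear_combination (-(x * y)) * (hα.E_idem g⁻¹).eq]
    exact hα.apply_mul g _ _ (hα.mul_E_mul_E x g⁻¹) (hα.mul_E_mul_E y g⁻¹)
  map_zero' := by simp only [zero_mul, hα.apply_zero]
  map_add' x y := by
    rw [add_mul]
    exact hα.apply_add g _ _ (hα.mul_E_mul_E x g⁻¹) (hα.mul_E_mul_E y g⁻¹)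

variable (hα : IsUnitalPartialAction E α)

@[simp]
theorem hom_apply (g : G) (x : S) : hα.hom g x = α g (x * E g⁻¹) := rfl

theorem hom_one (x : S) : hα.hom 1 x = x := by
  rw [hom_apply, inv_one, hα.E_one, mul_one, hα.one_apply]

theorem hom_hom (g k : G) (x : S) : hα.hom g (hα.hom k x) = hα.hom (g * k) x * E g :=
  hα.apply_apply g k x

theorem hom_mul_E_self (g : G) (x : S) : hα.hom g x * E g = hα.hom g x := by
  simpa only [mul_one, hα.hom_one] using (hα.hom_hom g 1 x).symm

theorem hom_E (g k : G) : hα.hom g (E k) = E g * E (g * k) := by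
  rw [hom_apply, mul_comm]
  exact hα.apply_E_mul_E g k

theorem hom_mul_E (g k : G) (x : S) : hα.hom g (x * E k) = hα.hom g x * E (g * k) := by
  rw [map_mul, hα.hom_E, ← mul_assoc, hα.hom_mul_E_self]

theorem hom_inv_hom (g : G) (x : S) : hα.hom g⁻¹ (hα.hom g x) = x * E g⁻¹ := by
  rw [hα.hom_hom, inv_mul_cancel, hα.hom_one]

def trace [Fintype G] (t : S) : S := ∑ g, hα.hom g t

theorem hom_trace [Fintype G] (k : G) (t : S) : hα.hom k (hα.trace t) = hα.trace t * E k := by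
  simp only [trace, map_sum, hα.hom_hom, Finset.sum_mul]
  exact Fintype.sum_equiv (Equiv.mulLeft k) _ _ fun _ => rfl

variable [DecidableEq G] {ι : Type*}

def IsGaloisCoordinates (s : Finset ι) (x y : ι → S) : Prop :=
  ∀ g, ∑ i ∈ s, x i * hα.hom g (y i) = if g = 1 then 1 else 0

variable {s : Finset ι} {x y : ι → S}

theorem sum_mul_hom_mul (hGal : hα.IsGaloisCoordinates s x y) (g : G) (c : S) :
    ∑ i ∈ s, x i * hα.hom g (y i * c) = if g = 1 then c else 0 := by
  simp_rw [map_mul, ← mul_assoc, ← Finset.sum_mul, hGal g]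
  split_ifs with hg
  · rw [hg, one_mul, hα.hom_one]
  · exact zero_mul _

theorem sum_trace_mul [Fintype G] (hGal : hα.IsGaloisCoordinates s x y) (c : S) :
    ∑ i ∈ s, hα.trace (y i * c) * x i = c := by
  simp_rw [trace, Finset.sum_mul, mul_comm _ (x _)]
  rw [Finset.sum_comm]
  simp_rw [hα.sum_mul_hom_mul hGal]
  simp

end IsUnitalPartialAction

theorem mem_span_mul_tmul_mul_iff {R A B : Type*} [CommSemiring R] [Semiring A] [Semiring B]
    [Algebra R A] [Algebra R B] {p : A} {q : B} (hp : IsIdempotentElem p) (hq : IsIdempotentElem q)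
    (z : A ⊗[R] B) :
    z ∈ Submodule.span R {u | ∃ a b, u = (a * p) ⊗ₜ[R] (b * q)} ↔ z * (p ⊗ₜ q) = z := by
  constructor
  · intro hz
    induction hz using Submodule.span_induction with
    | mem _ hu =>
      obtain ⟨a, b, rfl⟩ := hu
      rw [Algebra.TensorProduct.tmul_mul_tmul, mul_assoc, mul_assoc, hp.eq, hq.eq]
    | zero => exact zero_mul _
    | add u v _ _ hu hv => rw [add_mul, hu, hv]
    | smul r u _ hu => rw [smul_mul_assoc, hu]
  · intro hz
    rw [← hz]
    clear hz
    induction z using TensorProduct.induction_on with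
    | zero => simp
    | tmul a b => exact Submodule.subset_span ⟨a, b, Algebra.TensorProduct.tmul_mul_tmul _ _ _ _⟩
    | add u v hu hv => exact add_mul u v _ ▸ Submodule.add_mem _ hu hv

namespace IsUnitalPartialAction

variable {G S R : Type*} [CommRing S] [CommRing R] [Algebra R S] {E : G → S} {α : G → S → S}

section Group

variable [Group G] (hα : IsUnitalPartialAction E α)

def tensorInverse (R : Type*) [CommRing R] [Algebra R S] [Fintype G] {ι : Type*} (s : Finset ι)
    (x y : ι → S) : (G → S) →+ S ⊗[R] S :=
  AddMonoidHom.mk' (fun a => ∑ g, ∑ i ∈ s, x i ⊗ₜ[R] hα.hom g⁻¹ (y i * a g)) fun a b => by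
    simp only [Pi.add_apply, mul_add, map_add, tmul_add, Finset.sum_add_distrib]

theorem tensorInverse_apply [Fintype G] {ι : Type*} (s : Finset ι) (x y : ι → S) (a : G → S) :
    hα.tensorInverse R s x y a = ∑ g, ∑ i ∈ s, x i ⊗ₜ[R] hα.hom g⁻¹ (y i * a g) :=
  rfl

variable {φ : S ⊗[R] S →ₐ[R] (G → S)}

theorem phi_apply_mul_E (hφ : ∀ a b, φ (a ⊗ₜ b) = fun g => a * hα.hom g b) (z : S ⊗[R] S)
    (g : G) : φ z g * E g = φ z g := by
  induction z using TensorProduct.induction_on with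
  | zero => simp
  | tmul a b => rw [hφ, mul_assoc, hα.hom_mul_E_self]
  | add u v hu hv => simp only [map_add, Pi.add_apply, add_mul, hu, hv]

variable [Fintype G] [DecidableEq G] {ι : Type*} {s : Finset ι} {x y : ι → S}

theorem phi_tensorInverse
    (hGal : hα.IsGaloisCoordinates s x y)
    (hφ : ∀ a b, φ (a ⊗ₜ b) = fun g => a * hα.hom g b) (a : G → S) (ha : ∀ g, a g * E g = a g) :
    φ (hα.tensorInverse R s x y a) = a := by
  funext k
  calc φ (hα.tensorInverse R s x y a) k
      = ∑ g, (∑ i ∈ s, x i * hα.hom (k * g⁻¹) (y i * a g)) * E k := by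
        simp only [tensorInverse_apply, map_sum, Finset.sum_apply, hφ, hα.hom_hom,
          Finset.sum_mul, mul_assoc]
    _ = ∑ g, if k = g then a g * E k else 0 := by
        simp_rw [hα.sum_mul_hom_mul hGal, mul_inv_eq_one, ite_mul, zero_mul]
    _ = a k := by rw [Finset.sum_ite_eq, if_pos (Finset.mem_univ _), ha]

theorem tensorInverse_phi
    (hGal : hα.IsGaloisCoordinates s x y)
    (hR : ∀ t, (∀ g, hα.hom g t = t * E g) → t ∈ Set.range (algebraMap R S))
    (hφ : ∀ a b, φ (a ⊗ₜ b) = fun g => a * hα.hom g b) (z : S ⊗[R] S) :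
    hα.tensorInverse R s x y (φ z) = z := by
  induction z using TensorProduct.induction_on with
  | zero => rw [map_zero, map_zero]
  | add u v hu hv => rw [map_add, map_add, hu, hv]
  | tmul a b =>
    have hom_inv_mul_hom (g : G) (t : S) :
        hα.hom g⁻¹ (t * (a * hα.hom g b)) = hα.hom g⁻¹ (t * a) * b := by
      rw [← mul_assoc, map_mul, hα.hom_inv_hom, mul_comm b, ← mul_assoc, hα.hom_mul_E_self]
    have sum_hom_inv (t : S) : ∑ g : G, hα.hom g⁻¹ t = hα.trace t :=
      Equiv.sum_comp (Equiv.inv G) (hα.hom · t)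
    have tmul_trace_mul (i : ι) :
        x i ⊗ₜ[R] (hα.trace (y i * a) * b) = (hα.trace (y i * a) * x i) ⊗ₜ b := by
      obtain ⟨r, hr⟩ := hR _ fun g => hα.hom_trace g (y i * a)
      rw [← hr, ← Algebra.smul_def, ← Algebra.smul_def, smul_tmul]
    calc hα.tensorInverse R s x y (φ (a ⊗ₜ b))
        = ∑ i ∈ s, x i ⊗ₜ[R] ((∑ g : G, hα.hom g⁻¹ (y i * a)) * b) := by
          simp only [tensorInverse_apply, hφ, hom_inv_mul_hom, Finset.sum_mul, tmul_sum]
          exact Finset.sum_comm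
      _ = ∑ i ∈ s, (hα.trace (y i * a) * x i) ⊗ₜ b := by simp_rw [sum_hom_inv, tmul_trace_mul]
      _ = a ⊗ₜ b := by rw [← sum_tmul, hα.sum_trace_mul hGal]

end Group

section CommGroup

variable [CommGroup G] (hα : IsUnitalPartialAction E α) {φ : S ⊗[R] S →ₐ[R] (G → S)}

theorem phi_E_tmul_E (hφ : ∀ a b, φ (a ⊗ₜ b) = fun g => a * hα.hom g b) (h l : G) :
    φ (E h ⊗ₜ E l⁻¹) = fun g => E g * E h * E (l⁻¹ * g) := by
  rw [hφ]
  funext g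
  rw [hα.hom_E, mul_comm g]
  ring

theorem image_span_E_tmul_E [Fintype G] [DecidableEq G] {ι : Type*} {s : Finset ι} {x y : ι → S}
    (hGal : hα.IsGaloisCoordinates s x y)
    (hφ : ∀ a b, φ (a ⊗ₜ b) = fun g => a * hα.hom g b) (h l : G) :
    φ '' (Submodule.span R {u | ∃ a b : S, u = (a * E h) ⊗ₜ[R] (b * E l⁻¹)} : Set (S ⊗[R] S)) =
      {a | (∀ g, a g * E g = a g) ∧ ∀ g, a g * (E g * E h * E (l⁻¹ * g)) = a g} := by
  have hmem := mem_span_mul_tmul_mul_iff (R := R) (hα.E_idem h) (hα.E_idem l⁻¹)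
  ext a
  constructor
  · rintro ⟨z, hz, rfl⟩
    rw [SetLike.mem_coe, hmem] at hz
    refine ⟨hα.phi_apply_mul_E hφ z, fun g => ?_⟩
    have hidem := ((hα.E_idem g).mul (hα.E_idem h)).mul (hα.E_idem (l⁻¹ * g))
    rw [← hz, map_mul, hα.phi_E_tmul_E hφ, Pi.mul_apply, mul_assoc, hidem.eq]
  · rintro ⟨ha, hae⟩
    refine ⟨hα.tensorInverse R s x y a * (E h ⊗ₜ E l⁻¹), (hmem _).2 ?_, ?_⟩
    · rw [mul_assoc, Algebra.TensorProduct.tmul_mul_tmul, (hα.E_idem h).eq, (hα.E_idem _).eq]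
    · rw [map_mul, hα.phi_tensorInverse hGal hφ a ha, hα.phi_E_tmul_E hφ]
      exact funext hae

theorem phi_hom_tmul_hom (hφ : ∀ a b, φ (a ⊗ₜ b) = fun g => a * hα.hom g b) (a b : S) (h l : G) :
    φ (hα.hom h a ⊗ₜ hα.hom l⁻¹ b) =
      fun g => hα.hom h (φ ((a * E h⁻¹) ⊗ₜ (b * E l)) ((h * l)⁻¹ * g)) := by
  funext g
  have hk : h * ((h * l)⁻¹ * g) = g * l⁻¹ := by
    rw [mul_inv_rev, mul_comm l⁻¹, ← mul_assoc, ← mul_assoc, mul_inv_cancel, one_mul, mul_comm]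
  simp only [hφ]
  rw [map_mul, hα.hom_mul_E, hα.hom_hom, hα.hom_hom, hα.hom_mul_E, hk,
    mul_inv_cancel, hα.E_one, inv_mul_cancel_right]
  linear_combination (-(hα.hom (g * l⁻¹) b * E g)) * hα.hom_mul_E_self h a

end CommGroup

end IsUnitalPartialAction

theorem stmt_18_general {G : Type*} [CommGroup G] [Fintype G]
    {S R : Type*} [CommRing S] [CommRing R] [Algebra R S]
    (E : G → S) (α : G → S → S)
    -- (E, α) is a unital partial action of G on S
    (hE1 : E 1 = 1) (hEidem : ∀ g : G, E g * E g = E g)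
    (hadd : ∀ (g : G) (x y : S), x * E g⁻¹ = x → y * E g⁻¹ = y →
      α g (x + y) = α g x + α g y)
    (hmul : ∀ (g : G) (x y : S), x * E g⁻¹ = x → y * E g⁻¹ = y →
      α g (x * y) = α g x * α g y)
    (hid : ∀ x : S, α 1 x = x)
    (hcomp1 : ∀ g k : G, α g (E g⁻¹ * E k) = E g * E (g * k))
    (hcomp2 : ∀ (g k : G) (x : S),
      α g (α k (x * E k⁻¹) * E g⁻¹) = α (g * k) (x * E (g * k)⁻¹) * E g)
    -- R is (isomorphic to) the invariant subring S^α
    (hRrange : Set.range (algebraMap R S) = {s : S | ∀ g : G, α g (s * E g⁻¹) = s * E g})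
    -- S is a partial α-Galois extension of R
    (n : ℕ) (x y : ℕ → S)
    (hGal : ∀ g : G,
      (g = 1 → ∑ i ∈ Finset.range n, x i * α g (y i * E g⁻¹) = 1) ∧
      (g ≠ 1 → ∑ i ∈ Finset.range n, x i * α g (y i * E g⁻¹) = 0))
    -- the map φ
    (φ : S ⊗[R] S →ₐ[R] (G → S))
    (hφ : ∀ a b : S, φ (a ⊗ₜ[R] b) = fun g : G => a * α g (b * E g⁻¹)) :
    -- φ is an isomorphism of R-algebras onto Ŝ
    Function.Injective φ ∧
    Set.range φ = {a : G → S | ∀ g : G, a g * E g = a g} ∧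
    -- φ((S·1_h) ⊗ (S·1_{l⁻¹})) = Ŝ·1̂_{(h,l)}
    (∀ h l : G,
      φ '' (Submodule.span R {u : S ⊗[R] S | ∃ a b : S, u = (a * E h) ⊗ₜ[R] (b * E l⁻¹)} : Set (S ⊗[R] S)) =
        {a : G → S | (∀ g : G, a g * E g = a g) ∧
          ∀ g : G, a g * (E g * E h * E (l⁻¹ * g)) = a g}) ∧
    -- φ intertwines the tensor-product partial action with γ
    (∀ (a b : S) (h l : G),
      φ (α h (a * E h⁻¹) ⊗ₜ[R] α l⁻¹ (b * E l)) =
        fun g : G => α h ((φ ((a * E h⁻¹) ⊗ₜ[R] (b * E l))) ((h * l)⁻¹ * g) * E h⁻¹)) := by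
  classical
  have hα : IsUnitalPartialAction E α := ⟨hE1, hEidem, hadd, hmul, hid, hcomp1, hcomp2⟩
  have hGal' : hα.IsGaloisCoordinates (Finset.range n) x y := fun g => by
    split_ifs with hg
    exacts [(hGal g).1 hg, (hGal g).2 hg]
  have hR (t : S) (ht : ∀ g, hα.hom g t = t * E g) : t ∈ Set.range (algebraMap R S) :=
    hRrange ▸ ht
  refine ⟨Function.LeftInverse.injective (hα.tensorInverse_phi hGal' hR hφ), ?_,
    hα.image_span_E_tmul_E hGal' hφ, fun a b h l => ?_⟩
  · ext a
    refine ⟨?_, fun ha => ⟨_, hα.phi_tensorInverse hGal' hφ a ha⟩⟩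
    rintro ⟨z, rfl⟩
    exact hα.phi_apply_mul_E hφ z
  · simpa only [IsUnitalPartialAction.hom_apply, inv_inv] using hα.phi_hom_tmul_hom hφ a b h l

/-- Proposition 6.1(ii): the map φ : S ⊗_R S → Ŝ, x ⊗ y ↦ (x·α_g(y·1_{g⁻¹}))_{g∈G},
is an R-algebra isomorphism onto Ŝ which is a partial (G×G)-isomorphism between the
tensor-product partial action and the partial action γ on Ŝ. -/
theorem stmt_18 {G : Type*} [CommGroup G] [Fintype G]
    {S R : Type*} [CommRing S] [CommRing R] [Algebra R S]
    (E : G → S) (α : G → S → S)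
    -- (E, α) is a unital partial action of G on S
    (hE1 : E 1 = 1) (hEidem : ∀ g : G, E g * E g = E g)
    (hbij : ∀ g : G, Set.BijOn (α g) {x : S | x * E g⁻¹ = x} {x : S | x * E g = x})
    (hadd : ∀ (g : G) (x y : S), x * E g⁻¹ = x → y * E g⁻¹ = y →
      α g (x + y) = α g x + α g y)
    (hmul : ∀ (g : G) (x y : S), x * E g⁻¹ = x → y * E g⁻¹ = y →
      α g (x * y) = α g x * α g y)
    (hid : ∀ x : S, α 1 x = x)
    (hcomp1 : ∀ g k : G, α g (E g⁻¹ * E k) = E g * E (g * k))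
    (hcomp2 : ∀ (g k : G) (x : S),
      α g (α k (x * E k⁻¹) * E g⁻¹) = α (g * k) (x * E (g * k)⁻¹) * E g)
    -- R is (isomorphic to) the invariant subring S^α
    (hRinj : Function.Injective (algebraMap R S))
    (hRrange : Set.range (algebraMap R S) = {s : S | ∀ g : G, α g (s * E g⁻¹) = s * E g})
    -- S is a partial α-Galois extension of R
    (n : ℕ) (x y : ℕ → S)
    (hGal : ∀ g : G,
      (g = 1 → ∑ i ∈ Finset.range n, x i * α g (y i * E g⁻¹) = 1) ∧
      (g ≠ 1 → ∑ i ∈ Finset.range n, x i * α g (y i * E g⁻¹) = 0))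
    -- the map φ
    (φ : S ⊗[R] S →ₐ[R] (G → S))
    (hφ : ∀ a b : S, φ (a ⊗ₜ[R] b) = fun g : G => a * α g (b * E g⁻¹)) :
    -- φ is an isomorphism of R-algebras onto Ŝ
    Function.Injective φ ∧
    Set.range φ = {a : G → S | ∀ g : G, a g * E g = a g} ∧
    -- φ((S·1_h) ⊗ (S·1_{l⁻¹})) = Ŝ·1̂_{(h,l)}
    (∀ h l : G,
      φ '' (Submodule.span R {u : S ⊗[R] S | ∃ a b : S, u = (a * E h) ⊗ₜ[R] (b * E l⁻¹)} : Set (S ⊗[R] S)) =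
        {a : G → S | (∀ g : G, a g * E g = a g) ∧
          ∀ g : G, a g * (E g * E h * E (l⁻¹ * g)) = a g}) ∧
    -- φ intertwines the tensor-product partial action with γ
    (∀ (a b : S) (h l : G),
      φ (α h (a * E h⁻¹) ⊗ₜ[R] α l⁻¹ (b * E l)) =
        fun g : G => α h ((φ ((a * E h⁻¹) ⊗ₜ[R] (b * E l))) ((h * l)⁻¹ * g) * E h⁻¹)) :=
  stmt_18_general E α hE1 hEidem hadd hmul hid hcomp1 hcomp2 hRrange n x y hGal φ hφ
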